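/- arXiv:2505.11306 — 2 statements merged into one kernel-verified Lean document; each statement's English description precedes it below -/
import Mathlib

section
/- Let (β_k)_{k≥1} be a noise schedule with β_k ∈ (0,1), α_k = 1 − β_k, ᾱ_k = ∏_{s=1}^k α_s, and let f, y_0 ∈ ℝ. On a probability space, let (z_k)_{k≥1} be an i.i.d. sequence of standard real Gaussian random variables (each with law N(0,1)), and define the CARD forward chain by Y_0 := y_0 and Y_k := √α_k · Y_{k−1} + (1 − √α_k) · f + √β_k · z_k. Then for every k ≥ 1 the law of Y_k is the real Gaussian measure with mean √ᾱ_k · y_0 + (1 − √ᾱ_k) · f and variance 1 − ᾱ_k. -/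
/-! Each step of the chain is an affine image of the previous value plus an independent centred
Gaussian, so by induction every `Y k` is Gaussian. The new noise `z (k+1)` is independent of
`Y k` because `Y k` is measurable with respect to `σ(z i : i ≤ k)`. Since `√ᾱ` and `ᾱ` are
multiplicative along the chain, the mean and the variance `1 - ᾱ_k` propagate by
`√ᾱ_{k+1} = √α_{k+1} √ᾱ_k` and `α_{k+1} (1 - ᾱ_k) + β_{k+1} = 1 - ᾱ_{k+1}`. -/

open MeasureTheory ProbabilityTheory

open scoped NNReal

section

variable {Ω : Type*} {mΩ : MeasurableSpace Ω} {P : Measure Ω}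

lemma adapted_of_recursion {β γ : Type*} [MeasurableSpace β] [MeasurableSpace γ]
    {F : Filtration ℕ mΩ} {z : ℕ → Ω → β} (hz : Adapted F z) {Y : ℕ → Ω → γ}
    {g : ℕ → γ → β → γ} (hg : ∀ k, Measurable (Function.uncurry (g k))) {y₀ : γ}
    (hY0 : ∀ ω, Y 0 ω = y₀) (hY : ∀ k ω, Y (k + 1) ω = g k (Y k ω) (z (k + 1) ω)) :
    Adapted F Y := by
  intro k
  induction k with
  | zero => simpa only [funext hY0] using measurable_const
  | succ k ih =>
    rw [funext (hY k)]
    exact (hg k).comp ((ih.mono (F.mono k.le_succ) le_rfl).prodMk (hz (k + 1)))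

lemma ProbabilityTheory.iIndepFun.indepFun_of_measurable_natural {β γ : Type*} [MeasurableSpace β]
    [NormedAddCommGroup β] [BorelSpace β] [MeasurableSpace γ] {z : ℕ → Ω → β}
    (hz : ∀ k, StronglyMeasurable (z k)) (hind : iIndepFun z P) {X : Ω → γ} {i j : ℕ}
    (hX : Measurable[Filtration.natural z hz i] X) (hij : i < j) :
    IndepFun X (z j) P := by
  rw [IndepFun_iff_Indep]
  exact indep_of_indep_of_le_left (hind.indep_comap_natural_of_lt hz hij).symm hX.comap_le

lemma hasLaw_gaussianReal_affine_add {X Z : Ω → ℝ} {m m' : ℝ} {v w : ℝ≥0}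
    (hX : HasLaw X (gaussianReal m v) P) (hZ : HasLaw Z (gaussianReal m' w) P)
    (hXZ : IndepFun X Z P) (a b c : ℝ) :
    HasLaw (fun ω ↦ a * X ω + b + c * Z ω) (gaussianReal (a * m + b + c * m')
      (.mk (a ^ 2) (sq_nonneg a) * v + .mk (c ^ 2) (sq_nonneg c) * w)) P := by
  have hX' := gaussianReal_add_const (gaussianReal_const_mul hX a) b
  have hZ' := gaussianReal_const_mul hZ c
  have hind : IndepFun (fun ω ↦ a * X ω + b) (fun ω ↦ c * Z ω) P :=
    hXZ.comp (φ := fun x ↦ a * x + b) (ψ := fun x ↦ c * x) (by fun_prop) (by fun_prop)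
  exact ⟨hX'.aemeasurable.add hZ'.aemeasurable,
    gaussianReal_add_gaussianReal_of_indepFun hind hX'.map_eq hZ'.map_eq⟩

end

lemma prod_one_sub_mem_Icc {ι : Type*} {s : Finset ι} {β : ι → ℝ}
    (hβ : ∀ i ∈ s, β i ∈ Set.Icc 0 1) : ∏ i ∈ s, (1 - β i) ∈ Set.Icc 0 1 := by
  have h : ∀ i ∈ s, 0 ≤ 1 - β i ∧ 1 - β i ≤ 1 := fun i hi ↦ by
    obtain ⟨h₀, h₁⟩ := hβ i hi
    constructor <;> linarith
  exact ⟨Finset.prod_nonneg fun i hi ↦ (h i hi).1,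
    Finset.prod_le_one (fun i hi ↦ (h i hi).1) fun i hi ↦ (h i hi).2⟩

lemma toNNReal_one_sub_mul_one_sub {a b : ℝ} (ha : a ≤ 1) (hb₀ : 0 ≤ b) (hb₁ : b ≤ 1) :
    (.mk (√(1 - b) ^ 2) (sq_nonneg _) : ℝ≥0) * (1 - a).toNNReal + .mk (√b ^ 2) (sq_nonneg _)
      = (1 - a * (1 - b)).toNNReal := by
  ext
  push_cast
  rw [Real.sq_sqrt (by linarith), Real.sq_sqrt hb₀, Real.coe_toNNReal _ (by linarith),
    Real.coe_toNNReal _ (by nlinarith)]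
  ring

/-- The step-`k` marginal law of the CARD forward chain started at `y₀` with
prior `f` is Gaussian with mean `√ᾱ_k y₀ + (1 - √ᾱ_k) f` and variance `1 - ᾱ_k`. -/
theorem card_forward_chain_marginal_law
    {Ω : Type*} [MeasurableSpace Ω] (μ : Measure Ω) [IsProbabilityMeasure μ]
    (β : ℕ → ℝ) (hβ : ∀ k, 1 ≤ k → β k ∈ Set.Ioo (0 : ℝ) 1)
    (f y₀ : ℝ)
    (z : ℕ → Ω → ℝ) (hzmeas : ∀ k, Measurable (z k))
    (hzlaw : ∀ k, Measure.map (z k) μ = gaussianReal 0 1)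
    (hzindep : iIndepFun z μ)
    (Y : ℕ → Ω → ℝ)
    (hY0 : ∀ ω, Y 0 ω = y₀)
    (hYrec : ∀ k ω, Y (k + 1) ω =
      Real.sqrt (1 - β (k + 1)) * Y k ω + (1 - Real.sqrt (1 - β (k + 1))) * f
        + Real.sqrt (β (k + 1)) * z (k + 1) ω)
    (abar : ℕ → ℝ)
    (habar : ∀ k, abar k = ∏ s ∈ Finset.Icc 1 k, (1 - β s)) :
    ∀ k, 1 ≤ k →
      Measure.map (Y k) μ
        = gaussianReal (Real.sqrt (abar k) * y₀ + (1 - Real.sqrt (abar k)) * f)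
            (Real.toNNReal (1 - abar k)) := by
  have hzsm : ∀ k, StronglyMeasurable (z k) := fun k ↦ (hzmeas k).stronglyMeasurable
  have hYadapted : Adapted (Filtration.natural z hzsm) Y := adapted_of_recursion
    (Filtration.stronglyAdapted_natural hzsm).adapted
    (g := fun k y x ↦ √(1 - β (k + 1)) * y + (1 - √(1 - β (k + 1))) * f + √(β (k + 1)) * x)
    (fun k ↦ by fun_prop) hY0 hYrec
  suffices hlaw : ∀ k, HasLaw (Y k)
      (gaussianReal (√(abar k) * y₀ + (1 - √(abar k)) * f) (1 - abar k).toNNReal) μ from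
    fun k _ ↦ (hlaw k).map_eq
  intro k
  induction k with
  | zero =>
    simpa [habar 0, gaussianReal_zero_var] using hasLaw_dirac_of_ae_eq (ae_of_all μ hY0)
  | succ k ih =>
    obtain ⟨hβ₀, hβ₁⟩ := hβ (k + 1) le_add_self
    have hab : abar (k + 1) = abar k * (1 - β (k + 1)) := by
      rw [habar, habar, Finset.prod_Icc_succ_top le_add_self]
    obtain ⟨hab₀, hab₁⟩ : abar k ∈ Set.Icc 0 1 := habar k ▸ prod_one_sub_mem_Icc fun s hs ↦
      Set.Ioo_subset_Icc_self (hβ s (Finset.mem_Icc.1 hs).1)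
    have hstep := hasLaw_gaussianReal_affine_add ih ⟨(hzmeas _).aemeasurable, hzlaw (k + 1)⟩
      (hzindep.indepFun_of_measurable_natural hzsm (hYadapted k) k.lt_succ_self)
      √(1 - β (k + 1)) ((1 - √(1 - β (k + 1))) * f) √(β (k + 1))
    rw [mul_zero, add_zero, mul_one, toNNReal_one_sub_mul_one_sub hab₁ hβ₀.le hβ₁.le] at hstep
    rw [funext (hYrec k), hab, Real.sqrt_mul hab₀]
    convert hstep using 2
    ring
end

section
/- For m ∈ ℝ and v > 0, write φ(x; m, v) = exp(−(x − m)²/(2v))/√(2πv) for the Gaussian density. Let α_k, ᾱ_{k−1} ∈ (0,1), β_k = 1 − α_k, ᾱ_k = ᾱ_{k−1} α_k, β̃_k = (1 − ᾱ_{k−1}) β_k/(1 − ᾱ_k), and f, y_0, y_{k−1}, y_k ∈ ℝ. Let m̃_k = (β_k √ᾱ_{k−1}/(1 − ᾱ_k)) y_0 + ((1 − ᾱ_{k−1})√α_k/(1 − ᾱ_k)) y_k + (1 + (√ᾱ_k − 1)(√α_k + √ᾱ_{k−1})/(1 − ᾱ_k)) f. Then the Gaussian density factorization holds: φ(y_k;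 √α_k y_{k−1} + (1 − √α_k) f, β_k) · φ(y_{k−1}; √ᾱ_{k−1} y_0 + (1 − √ᾱ_{k−1}) f, 1 − ᾱ_{k−1}) = φ(y_{k−1}; m̃_k, β̃_k) · φ(y_k; √ᾱ_k y_0 + (1 − √ᾱ_k) f, 1 − ᾱ_k). -/
/-!
Conditioning a Gaussian prior `x ~ N(μ, t)` on an affine Gaussian observation
`y ~ N(a x + c, s)` gives, by completing the square in `x`, a Gaussian posterior in `x`
of variance `s t / (s + a² t)` times the marginal `y ~ N(a μ + c, s + a² t)`.
The CARD forward step is of this form with `a = √α_k`, `c = (1 - √α_k) f`, `s = β_k`,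
and the prior is the marginal at step `k - 1`; since `β_k + α_k (1 - ᾱ_{k-1}) = 1 - ᾱ_k`,
the marginal is the one at step `k`.
-/

/-- The one-dimensional Gaussian density `φ(x; m, v)`. -/
noncomputable def gaussPDF (x m v : ℝ) : ℝ :=
  Real.exp (-(x - m) ^ 2 / (2 * v)) / Real.sqrt (2 * Real.pi * v)

open Real

lemma gaussPDF_mul_gaussPDF {v : ℝ} (hv : 0 ≤ v) (x m y n w : ℝ) :
    gaussPDF x m v * gaussPDF y n w
      = exp (-((x - m) ^ 2 / v + (y - n) ^ 2 / w) / 2) / (2 * π * √(v * w)) := by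
  have hsqrt : √(2 * π * v) * √(2 * π * w) = 2 * π * √(v * w) := by
    rw [← sqrt_mul (by positivity), show 2 * π * v * (2 * π * w) = (2 * π) ^ 2 * (v * w) by ring,
      sqrt_mul (by positivity), sqrt_sq (by positivity)]
  rw [gaussPDF, gaussPDF, div_mul_div_comm, ← exp_add, hsqrt]
  congr 2
  ring

lemma affine_sq_div_add_sq_div_eq {s t : ℝ} (hs : 0 < s) (ht : 0 < t) (a c x y μ : ℝ) :
    (y - (a * x + c)) ^ 2 / s + (x - μ) ^ 2 / t
      = (x - (a * t * (y - c) + s * μ) / (s + a ^ 2 * t)) ^ 2 / (s * t / (s + a ^ 2 * t))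
        + (y - (a * μ + c)) ^ 2 / (s + a ^ 2 * t) := by
  have hV : 0 < s + a ^ 2 * t := by positivity
  field_simp
  ring

theorem gaussPDF_affine_mul_gaussPDF {s t : ℝ} (hs : 0 < s) (ht : 0 < t) (a c x y μ : ℝ) :
    gaussPDF y (a * x + c) s * gaussPDF x μ t
      = gaussPDF x ((a * t * (y - c) + s * μ) / (s + a ^ 2 * t)) (s * t / (s + a ^ 2 * t))
        * gaussPDF y (a * μ + c) (s + a ^ 2 * t) := by
  have hV : 0 < s + a ^ 2 * t := by positivity
  rw [gaussPDF_mul_gaussPDF hs.le, gaussPDF_mul_gaussPDF (by positivity),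
    affine_sq_div_add_sq_div_eq hs ht, div_mul_cancel₀ _ hV.ne']

/-- Bayes computation for the CARD reverse posterior: the product of the CARD
one-step transition density and the multi-step marginal density factors as the
posterior density times the step-`k` marginal density. -/
theorem card_posterior_density_factorization
    (αk abar' : ℝ) (hαk : αk ∈ Set.Ioo (0 : ℝ) 1) (habar' : abar' ∈ Set.Ioo (0 : ℝ) 1)
    (βk abar btilde : ℝ) (hβk : βk = 1 - αk) (habar : abar = abar' * αk)
    (hbtilde : btilde = (1 - abar') * βk / (1 - abar))
    (f y₀ yk' yk : ℝ)
    (mTilde : ℝ)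
    (hm : mTilde = (βk * Real.sqrt abar' / (1 - abar)) * y₀
      + ((1 - abar') * Real.sqrt αk / (1 - abar)) * yk
      + (1 + (Real.sqrt abar - 1) * (Real.sqrt αk + Real.sqrt abar') / (1 - abar)) * f) :
    gaussPDF yk (Real.sqrt αk * yk' + (1 - Real.sqrt αk) * f) βk
        * gaussPDF yk' (Real.sqrt abar' * y₀ + (1 - Real.sqrt abar') * f) (1 - abar')
      = gaussPDF yk' mTilde btilde
        * gaussPDF yk (Real.sqrt abar * y₀ + (1 - Real.sqrt abar) * f) (1 - abar) := by
  obtain ⟨p, hp, rfl⟩ : ∃ p, 0 ≤ p ∧ αk = p ^ 2 := ⟨√αk, sqrt_nonneg _, (sq_sqrt hαk.1.le).symm⟩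
  obtain ⟨q, hq, rfl⟩ : ∃ q, 0 ≤ q ∧ abar' = q ^ 2 :=
    ⟨√abar', sqrt_nonneg _, (sq_sqrt habar'.1.le).symm⟩
  subst hβk habar hbtilde hm
  have hqp : √(q ^ 2 * p ^ 2) = q * p := by rw [← mul_pow, sqrt_sq (mul_nonneg hq hp)]
  have hvar : 1 - p ^ 2 + p ^ 2 * (1 - q ^ 2) = 1 - q ^ 2 * p ^ 2 := by ring
  have hD : 1 - p ^ 2 * q ^ 2 ≠ 0 :=
    (sub_pos.2 (mul_lt_one_of_nonneg_of_lt_one_left (sq_nonneg p) hαk.2 habar'.2.le)).ne'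
  rw [sqrt_sq hp, sqrt_sq hq, hqp,
    gaussPDF_affine_mul_gaussPDF (sub_pos.2 hαk.2) (sub_pos.2 habar'.2), hvar]
  congr 2
  · field_simp
    ring
  · ring
  · ring
end
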